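/- There exist a finite independent exchange model, a query set X ⊆ E, and edges e₁, e₂ ∈ E \ X such that, for all max-weight selections for the respective query sets, V^MAX(X ∪ {e₁, e₂}) + V^MAX(X) > V^MAX(X ∪ {e₁}) + V^MAX(X ∪ {e₂}). Hence with the max-weight matching policy, the single-stage edge-query objective is non-submodular in the set of queried edges. -/
import Mathlib


/-- A structure in an exchange is either a cycle or a chain. -/
inductive StructKind : Type
  | cycle : StructKind
  | chain : StructKind
  deriving DecidableEq

/-- A structure: a list of edges together with a cycle/chain tag. -/
abbrev ExchangeStruct (E : Type) := List E × StructKind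

/-- A finite independent exchange model: a finite edge set `E`, nonnegative edge
weights `w`, a finite set `structs` of structures (lists of distinct edges tagged as
cycles or chains), a nonempty finite collection `matchings` of feasible matchings
(subsets of `structs`), and per-edge probabilities `ρ e` (rejection if queried),
`φQ e` (post-match failure if queried and accepted), `φN e` (post-match failure if
not queried), all in `[0,1]`; all edges are independent. -/
structure ExchangeModel (E : Type) [Fintype E] [DecidableEq E] where
  w : E → ℝ
  w_nonneg : ∀ e, 0 ≤ w e
  structs : Finset (ExchangeStruct E)
  structs_nodup : ∀ c ∈ structs, c.1.Nodup
  matchings : Finset (Finset (ExchangeStruct E))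
  matchings_nonempty : matchings.Nonempty
  matchings_sub : ∀ x ∈ matchings, x ⊆ structs
  ρ : E → ℝ
  φQ : E → ℝ
  φN : E → ℝ
  ρ_mem : ∀ e, ρ e ∈ Set.Icc (0 : ℝ) 1
  φQ_mem : ∀ e, φQ e ∈ Set.Icc (0 : ℝ) 1
  φN_mem : ∀ e, φN e ∈ Set.Icc (0 : ℝ) 1

variable {E : Type} [Fintype E] [DecidableEq E]

/-- Expected final weight of a chain with edge list `es`:
`Σ_{k} w (e_k) · Π_{j ≤ k} s (e_j)`. -/
def chainVal (w s : E → ℝ) : List E → ℝ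
  | [] => 0
  | e :: es => s e * (w e + chainVal w s es)

/-- Expected final weight `G c s` of a structure `c` under per-edge success
probabilities `s`. -/
def structVal (w s : E → ℝ) (c : ExchangeStruct E) : ℝ :=
  match c.2 with
  | .cycle => (c.1.map w).sum * (c.1.map s).prod
  | .chain => chainVal w s c.1

/-- Per-edge success probabilities `s_{q,r}` for query set `q` and rejection set `r`. -/
def succProb (M : ExchangeModel E) (q r : Finset E) : E → ℝ :=
  fun e => if e ∈ r then 0 else if e ∈ q then 1 - M.φQ e else 1 - M.φN e

/-- Probability `P_q r` of rejection set `r ⊆ q`. -/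
def rejProb (M : ExchangeModel E) (q r : Finset E) : ℝ :=
  (∏ e ∈ r, M.ρ e) * ∏ e ∈ q \ r, (1 - M.ρ e)

/-- Expected final weight of a matching `x` under success probabilities `s`. -/
def matchVal (M : ExchangeModel E) (s : E → ℝ) (x : Finset (ExchangeStruct E)) : ℝ :=
  ∑ c ∈ x, structVal M.w s c

/-- The failure-aware optimal expected matching weight `max_{x ∈ M} Σ_{c ∈ x} G(c, s)`. -/
def bestVal (M : ExchangeModel E) (s : E → ℝ) : ℝ :=
  M.matchings.sup' M.matchings_nonempty (matchVal M s)

/-- The failure-aware value `V^FA q` of a query set `q`. -/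
def VFA (M : ExchangeModel E) (q : Finset E) : ℝ :=
  ∑ r ∈ q.powerset, rejProb M q r * bestVal M (succProb M q r)

/-- Nominal weight of (the edge list of) a chain under rejection set `r`: the summed
weight of all edges preceding the first rejected edge. -/
def chainNominal (w : E → ℝ) (r : Finset E) : List E → ℝ
  | [] => 0
  | e :: es => if e ∈ r then 0 else w e + chainNominal w r es

/-- Nominal weight `F c r` of a structure `c` under rejection set `r`. -/
def nominalVal (w : E → ℝ) (r : Finset E) (c : ExchangeStruct E) : ℝ :=
  match c.2 with
  | .cycle => if ∀ e ∈ c.1, e ∉ r then (c.1.map w).sum else 0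
  | .chain => chainNominal w r c.1

/-- `m` is a max-weight selection for query set `q`: to each rejection set `r ⊆ q` it
assigns a feasible matching maximizing the nominal weight `Σ_{c ∈ x} F(c, r)`. -/
def IsMaxWeightSelection (M : ExchangeModel E) (q : Finset E)
    (m : Finset E → Finset (ExchangeStruct E)) : Prop :=
  ∀ r ∈ q.powerset, m r ∈ M.matchings ∧
    ∀ x ∈ M.matchings, ∑ c ∈ x, nominalVal M.w r c ≤ ∑ c ∈ m r, nominalVal M.w r c

/-- The max-weight value `V^MAX (q; m)` of query set `q` under max-weight selection `m`. -/
def VMAX (M : ExchangeModel E) (q : Finset E)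
    (m : Finset E → Finset (ExchangeStruct E)) : ℝ :=
  ∑ r ∈ q.powerset, rejProb M q r * ∑ c ∈ m r, structVal M.w (succProb M q r) c

/-- The two-edge cycle used in the counterexample. -/
def Cex : ExchangeStruct (Fin 3) := ([0, 1], .cycle)

/-- The one-edge fallback cycle used in the counterexample. -/
def Dex : ExchangeStruct (Fin 3) := ([2], .cycle)

/-- The counterexample model. -/
noncomputable def Mex : ExchangeModel (Fin 3) where
  w := fun _ => 1
  w_nonneg := fun _ => zero_le_one
  structs := {Cex, Dex}
  structs_nodup := by decide
  matchings := {{Cex}, {Dex}}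
  matchings_nonempty := ⟨{Cex}, by simp⟩
  matchings_sub := by decide
  ρ := fun e => if e = 2 then 0 else 1/2
  φQ := fun _ => 0
  φN := fun e => if e = 2 then 0 else 1
  ρ_mem := by intro e; split <;> norm_num
  φQ_mem := by intro e; norm_num
  φN_mem := by intro e; split <;> norm_num

lemma mex_cases {x : Finset (ExchangeStruct (Fin 3))} (hx : x ∈ Mex.matchings) :
    x = {Cex} ∨ x = {Dex} := by
  simpa [Mex, Finset.mem_insert, Finset.mem_singleton] using hx

lemma pickC {q : Finset (Fin 3)} {m : Finset (Fin 3) → Finset (ExchangeStruct (Fin 3))}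
    (h : IsMaxWeightSelection Mex q m) {r : Finset (Fin 3)} (hr : r ∈ q.powerset)
    (hgt : nominalVal Mex.w r Dex < nominalVal Mex.w r Cex) : m r = {Cex} := by
  obtain ⟨hm, hmax⟩ := h r hr
  rcases mex_cases hm with h' | h'
  · exact h'
  · exfalso
    have := hmax {Cex} (by simp [Mex])
    rw [h'] at this
    simp only [Finset.sum_singleton] at this
    linarith

lemma pickD {q : Finset (Fin 3)} {m : Finset (Fin 3) → Finset (ExchangeStruct (Fin 3))}
    (h : IsMaxWeightSelection Mex q m) {r : Finset (Fin 3)} (hr : r ∈ q.powerset)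
    (hgt : nominalVal Mex.w r Cex < nominalVal Mex.w r Dex) : m r = {Dex} := by
  obtain ⟨hm, hmax⟩ := h r hr
  rcases mex_cases hm with h' | h'
  · exfalso
    have := hmax {Dex} (by simp [Mex])
    rw [h'] at this
    simp only [Finset.sum_singleton] at this
    linarith
  · exact h'

/-- With the max-weight matching policy, the single-stage edge-query objective is
non-submodular in the set of queried edges: there are a finite independent exchange
model, a query set `X`, and two distinct edges `e₁, e₂ ∉ X` such that, for all
max-weight selections for the respective query sets,
`V^MAX(X ∪ {e₁, e₂}) + V^MAX(X) > V^MAX(X ∪ {e₁}) + V^MAX(X ∪ {e₂})`. -/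
theorem VMAX_non_submodular :
    ∃ (n : ℕ) (M : ExchangeModel (Fin n)) (X : Finset (Fin n)) (e₁ e₂ : Fin n),
      e₁ ∉ X ∧ e₂ ∉ X ∧ e₁ ≠ e₂ ∧
      ∀ m₁₂ mX m₁ m₂,
        IsMaxWeightSelection M (X ∪ {e₁, e₂}) m₁₂ →
        IsMaxWeightSelection M X mX →
        IsMaxWeightSelection M (X ∪ {e₁}) m₁ →
        IsMaxWeightSelection M (X ∪ {e₂}) m₂ →
        VMAX M (X ∪ {e₁, e₂}) m₁₂ + VMAX M X mX
          > VMAX M (X ∪ {e₁}) m₁ + VMAX M (X ∪ {e₂}) m₂ := by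
  refine ⟨3, Mex, ∅, 0, 1, by simp, by simp, by decide, ?_⟩
  intro m₁₂ mX m₁ m₂ h₁₂ hX h₁ h₂
  -- normalize the query sets
  have hq12 : (∅ ∪ {0, 1} : Finset (Fin 3)) = {0, 1} := by decide
  have hq1 : (∅ ∪ {0} : Finset (Fin 3)) = {0} := by decide
  have hq2 : (∅ ∪ {1} : Finset (Fin 3)) = {1} := by decide
  rw [hq12] at h₁₂ ⊢
  rw [hq1] at h₁ ⊢
  rw [hq2] at h₂ ⊢
  -- forced selections
  have nomC : ∀ r : Finset (Fin 3), nominalVal Mex.w r Cex =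
      if 0 ∈ r ∨ 1 ∈ r then 0 else 2 := by
    intro r
    by_cases h0 : (0 : Fin 3) ∈ r <;> by_cases h1 : (1 : Fin 3) ∈ r <;>
      simp [nominalVal, Cex, Mex, h0, h1] <;> norm_num
  have nomD : ∀ r : Finset (Fin 3), (2 : Fin 3) ∉ r → nominalVal Mex.w r Dex = 1 := by
    intro r h2
    simp [nominalVal, Dex, Mex, h2]
  have e12 : mX ∅ = {Cex} := by
    refine pickC hX (by simp) ?_
    rw [nomC, nomD _ (by simp)]; norm_num
  have a0 : m₁ ∅ = {Cex} := by
    refine pickC h₁ (by simp) ?_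
    rw [nomC, nomD _ (by simp)]; norm_num
  have a1 : m₁ {0} = {Dex} := by
    refine pickD h₁ (by simp) ?_
    rw [nomC, nomD _ (by decide)]; norm_num
  have b0 : m₂ ∅ = {Cex} := by
    refine pickC h₂ (by simp) ?_
    rw [nomC, nomD _ (by simp)]; norm_num
  have b1 : m₂ {1} = {Dex} := by
    refine pickD h₂ (by simp) ?_
    rw [nomC, nomD _ (by decide)]; norm_num
  have c0 : m₁₂ ∅ = {Cex} := by
    refine pickC h₁₂ (by simp) ?_
    rw [nomC, nomD _ (by simp)]; norm_num
  have c1 : m₁₂ {0} = {Dex} := by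
    refine pickD h₁₂ (by decide) ?_
    rw [nomC, nomD _ (by decide)]; norm_num
  have c2 : m₁₂ {1} = {Dex} := by
    refine pickD h₁₂ (by decide) ?_
    rw [nomC, nomD _ (by decide)]; norm_num
  have c3 : m₁₂ {0, 1} = {Dex} := by
    refine pickD h₁₂ (by decide) ?_
    rw [nomC, nomD _ (by decide)]; norm_num
  -- compute the four values
  have V0 : VMAX Mex ∅ mX = 0 := by
    rw [VMAX]
    rw [show (∅ : Finset (Fin 3)).powerset = {∅} from by decide]
    rw [Finset.sum_singleton, e12, Finset.sum_singleton]
    norm_num [rejProb, structVal, succProb, Cex, Mex, Fin.ext_iff]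
  have V1 : VMAX Mex {0} m₁ = 1/2 := by
    rw [VMAX]
    rw [show ({0} : Finset (Fin 3)).powerset = {∅, {0}} from by decide]
    rw [Finset.sum_insert (by decide), Finset.sum_singleton, a0, a1,
      Finset.sum_singleton, Finset.sum_singleton]
    norm_num [rejProb, structVal, succProb, Cex, Dex, Mex, Fin.ext_iff,
      show ({0} \ ∅ : Finset (Fin 3)) = {0} from by decide,
      show ({0} \ {0} : Finset (Fin 3)) = ∅ from by decide]
  have V2 : VMAX Mex {1} m₂ = 1/2 := by
    rw [VMAX]
    rw [show ({1} : Finset (Fin 3)).powerset = {∅, {1}} from by decide]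
    rw [Finset.sum_insert (by decide), Finset.sum_singleton, b0, b1,
      Finset.sum_singleton, Finset.sum_singleton]
    norm_num [rejProb, structVal, succProb, Cex, Dex, Mex, Fin.ext_iff,
      show ({1} \ ∅ : Finset (Fin 3)) = {1} from by decide,
      show ({1} \ {1} : Finset (Fin 3)) = ∅ from by decide]
  have V12 : VMAX Mex {0, 1} m₁₂ = 5/4 := by
    rw [VMAX]
    rw [show ({0, 1} : Finset (Fin 3)).powerset = {∅, {0}, {1}, {0, 1}} from by decide]
    rw [Finset.sum_insert (by decide), Finset.sum_insert (by decide),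
      Finset.sum_insert (by decide), Finset.sum_singleton, c0, c1, c2, c3,
      Finset.sum_singleton, Finset.sum_singleton, Finset.sum_singleton,
      Finset.sum_singleton]
    norm_num [rejProb, structVal, succProb, Cex, Dex, Mex, Fin.ext_iff,
      show ({0, 1} \ ∅ : Finset (Fin 3)) = {0, 1} from by decide,
      show ({0, 1} \ {0} : Finset (Fin 3)) = {1} from by decide,
      show ({0, 1} \ {1} : Finset (Fin 3)) = {0} from by decide,
      show ({0, 1} \ {0, 1} : Finset (Fin 3)) = ∅ from by decide]
  rw [V0, V1, V2, V12]
  norm_num
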